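/- The metaplectic map μ(J₀) = (A⁰ + 1/2)/2, μ(J±) = (A±)²/[2]_{q^{1/2}} defines a representation of U_q(su(1,1)) on the q-oscillator Fock space: [μ(J₀),μ(J±)] = ±μ(J±) and μ(J₋)μ(J₊) − q²·μ(J₊)μ(J₋) = q^{2μ(J₀)}·[2μ(J₀)]_q, where q^{2μ(J₀)}|n⟩ = q^{n+1/2}|n⟩. -/

import Mathlib

noncomputable section

/-- The `k`-mode q-oscillator Fock space: formal complex linear combinations of
occupation-number basis states `|n₁,…,n_k⟩`. -/
abbrev Fock (k : ℕ) := (Fin k → ℕ) →₀ ℂ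

/-- Lowering coefficient `√((1−qᵐ)/(1−q))`. -/
def cf (q : ℝ) (m : ℕ) : ℂ := (Real.sqrt ((1 - q ^ m) / (1 - q)) : ℝ)

/-- Raising operator in mode `i`: `A⁺|n⟩ = √((1−q^{n+1})/(1−q)) |n+1⟩`. -/
def up (q : ℝ) {k : ℕ} (i : Fin k) : Module.End ℂ (Fock k) :=
  Finsupp.lsum ℂ fun n => cf q (n i + 1) • Finsupp.lsingle (Function.update n i (n i + 1))

/-- Lowering operator in mode `i`: `A⁻|n⟩ = √((1−qⁿ)/(1−q)) |n−1⟩` (kills `|0⟩`). -/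
def dn (q : ℝ) {k : ℕ} (i : Fin k) : Module.End ℂ (Fock k) :=
  Finsupp.lsum ℂ fun n => cf q (n i) • Finsupp.lsingle (Function.update n i (n i - 1))

/-- Diagonal operator acting on `|n⟩` by the scalar `d n`. -/
def diag {k : ℕ} (d : (Fin k → ℕ) → ℂ) : Module.End ℂ (Fock k) :=
  Finsupp.lsum ℂ fun n => d n • Finsupp.lsingle n

/-- `q`-exponential of a diagonal operator: acts on `|n⟩` by `q^{E n}` (real power). -/
def qd (q : ℝ) {k : ℕ} (E : (Fin k → ℕ) → ℝ) : Module.End ℂ (Fock k) :=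
  diag fun n => ((q ^ (E n) : ℝ) : ℂ)

/-- Basis state `|n⟩`. -/
def ket {k : ℕ} (n : Fin k → ℕ) : Fock k := Finsupp.single n 1

/-!
All operators act on the basis vectors `ket n` diagonally or as weighted shifts of the occupation
number by `±2`. Along such a shift the eigenvalue of `J₀` moves by exactly `±1`, which gives the
commutators. The products `J∓J±` are diagonal with eigenvalues `c²[n+1][n+2]` and `c²[n][n-1]`,
where `c = [2]_{q^{1/2}}⁻¹` and `[m] = (1 - qᵐ)/(1 - q)`; the remaining relation then reduces to
`(1 - q^{n+1})(1 - q^{n+2}) - q²(1 - qⁿ)(1 - q^{n-1}) = (1 - q²)(1 - q^{2n+1})` and `c² = q/(1 + q)²`.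
-/

section Operators

variable {k : ℕ}

theorem Fock.endomorphism_ext {f g : Module.End ℂ (Fock k)} (h : ∀ n, f (ket n) = g (ket n)) :
    f = g :=
  Finsupp.lhom_ext fun n c => by
    rw [← Finsupp.smul_single_one, map_smul, map_smul]
    exact congrArg (c • ·) (h n)

@[simp]
theorem up_ket (q : ℝ) (i : Fin k) (n : Fin k → ℕ) :
    up q i (ket n) = cf q (n i + 1) • ket (Function.update n i (n i + 1)) := by
  simp [up, ket]

@[simp]
theorem dn_ket (q : ℝ) (i : Fin k) (n : Fin k → ℕ) :
    dn q i (ket n) = cf q (n i) • ket (Function.update n i (n i - 1)) := by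
  simp [dn, ket]

@[simp]
theorem diag_ket (d : (Fin k → ℕ) → ℂ) (n : Fin k → ℕ) : diag d (ket n) = d n • ket n := by
  simp [diag, ket]

@[simp]
theorem cf_zero (q : ℝ) : cf q 0 = 0 := by
  simp [cf]

theorem Fock.mul_smul_sub_smul_mul (A B : Module.End ℂ (Fock k)) (c : ℂ) :
    A * (c • B) - (c • B) * A = c • (A * B - B * A) := by
  rw [mul_smul_comm, smul_mul_assoc]
  exact (smul_sub c (A * B) (B * A)).symm

theorem diag_mul_diag (d e : (Fin k → ℕ) → ℂ) : diag d * diag e = diag (d * e) :=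
  Fock.endomorphism_ext fun n => by simp [smul_smul, mul_comm]

theorem smul_diag (c : ℂ) (d : (Fin k → ℕ) → ℂ) : c • diag d = diag (c • d) :=
  Fock.endomorphism_ext fun n => by simp [smul_smul]

theorem diag_sub (d e : (Fin k → ℕ) → ℂ) : diag d - diag e = diag (d - e) :=
  Fock.endomorphism_ext fun n => by simp [sub_smul]

theorem up_sq_ket (q : ℝ) (i : Fin k) (n : Fin k → ℕ) :
    (up q i ^ 2) (ket n) =
      (cf q (n i + 1) * cf q (n i + 2)) • ket (Function.update n i (n i + 2)) := by
  simp only [pow_two, Module.End.mul_apply, up_ket, map_smul, smul_smul, Function.update_self,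
    Function.update_idem]

theorem dn_sq_ket (q : ℝ) (i : Fin k) (n : Fin k → ℕ) :
    (dn q i ^ 2) (ket n) =
      (cf q (n i) * cf q (n i - 1)) • ket (Function.update n i (n i - 2)) := by
  simp only [pow_two, Module.End.mul_apply, dn_ket, map_smul, smul_smul, Function.update_self,
    Function.update_idem, Nat.sub_sub]

theorem dn_sq_ket_of_lt_two (q : ℝ) (i : Fin k) {n : Fin k → ℕ} (hn : n i < 2) :
    (dn q i ^ 2) (ket n) = 0 := by
  rw [dn_sq_ket]
  interval_cases h : n i <;> simp

theorem dn_sq_mul_up_sq (q : ℝ) (i : Fin k) :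
    dn q i ^ 2 * up q i ^ 2 = diag fun n => cf q (n i + 1) ^ 2 * cf q (n i + 2) ^ 2 := by
  refine Fock.endomorphism_ext fun n => ?_
  rw [Module.End.mul_apply, up_sq_ket, map_smul, dn_sq_ket, diag_ket, smul_smul]
  simp only [Function.update_self, Function.update_idem, Nat.add_sub_cancel,
    Function.update_eq_self, show n i + 2 - 1 = n i + 1 by omega]
  congr 1
  ring

theorem up_sq_mul_dn_sq (q : ℝ) (i : Fin k) :
    up q i ^ 2 * dn q i ^ 2 = diag fun n => cf q (n i) ^ 2 * cf q (n i - 1) ^ 2 := by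
  refine Fock.endomorphism_ext fun n => ?_
  rw [Module.End.mul_apply, diag_ket]
  obtain hn | hn := lt_or_ge (n i) 2
  · rw [dn_sq_ket_of_lt_two q i hn, map_zero]
    interval_cases h : n i <;> simp
  · rw [dn_sq_ket, map_smul, up_sq_ket, smul_smul]
    simp only [Function.update_self, Function.update_idem, Nat.sub_add_cancel hn,
      Function.update_eq_self, show n i - 2 + 1 = n i - 1 by omega]
    congr 1
    ring

theorem diag_mul_up_sq_sub_up_sq_mul_diag (q : ℝ) (i : Fin k) {d : (Fin k → ℕ) → ℂ}
    {c : ℂ} (hd : ∀ n, d (Function.update n i (n i + 2)) = d n + c) :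
    diag d * up q i ^ 2 - up q i ^ 2 * diag d = c • up q i ^ 2 := by
  refine Fock.endomorphism_ext fun n => ?_
  simp only [LinearMap.sub_apply, Module.End.mul_apply, LinearMap.smul_apply, diag_ket, map_smul,
    up_sq_ket, smul_smul, hd, ← sub_smul]
  congr 1
  ring

theorem diag_mul_dn_sq_sub_dn_sq_mul_diag (q : ℝ) (i : Fin k) {d : (Fin k → ℕ) → ℂ}
    {c : ℂ} (hd : ∀ n, 2 ≤ n i → d (Function.update n i (n i - 2)) = d n - c) :
    diag d * dn q i ^ 2 - dn q i ^ 2 * diag d = -(c • dn q i ^ 2) := by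
  refine Fock.endomorphism_ext fun n => ?_
  simp only [LinearMap.sub_apply, LinearMap.neg_apply, Module.End.mul_apply, LinearMap.smul_apply,
    diag_ket, map_smul]
  obtain hn | hn := lt_or_ge (n i) 2
  · simp [dn_sq_ket_of_lt_two q i hn]
  · simp only [dn_sq_ket, map_smul, diag_ket, smul_smul, hd n hn, ← sub_smul, ← neg_smul]
    congr 1
    ring

end Operators

def qNum (q : ℝ) (m : ℕ) : ℝ := (1 - q ^ m) / (1 - q)

theorem cf_sq {q : ℝ} (hq0 : 0 ≤ q) (hq1 : q < 1) (m : ℕ) : cf q m ^ 2 = qNum q m := by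
  have h : 0 ≤ 1 - q ^ m := sub_nonneg.mpr (pow_le_one₀ hq0 hq1.le)
  rw [cf, ← Complex.ofReal_pow, Real.sq_sqrt (div_nonneg h (by linarith)), qNum]

/-- At `m = 0` the truncated `m - 1` is harmless: its factor `1 - q ^ 0` vanishes. -/
theorem one_sub_pow_mul_sub {R : Type*} [CommRing R] (q : R) (m : ℕ) :
    (1 - q ^ (m + 1)) * (1 - q ^ (m + 2)) - q ^ 2 * ((1 - q ^ m) * (1 - q ^ (m - 1))) =
      (1 - q ^ 2) * (1 - q ^ (2 * m + 1)) := by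
  cases m with
  | zero => ring
  | succ m => simp only [Nat.add_sub_cancel]; ring

theorem qNum_mul_qNum_sub {q : ℝ} (hq1 : q ≠ 1) (m : ℕ) :
    qNum q (m + 1) * qNum q (m + 2) - q ^ 2 * (qNum q m * qNum q (m - 1)) =
      (1 + q) * (1 - q ^ (2 * m + 1)) / (1 - q) := by
  have h : 1 - q ≠ 0 := sub_ne_zero.mpr hq1.symm
  simp only [qNum]
  field_simp
  linear_combination one_sub_pow_mul_sub q m

theorem metaplectic_casimir_coeff {q : ℝ} (hq0 : 0 < q) (hq1 : q ≠ 1) (m : ℕ) :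
    (q ^ ((1:ℝ)/2) + q ^ (-(1:ℝ)/2))⁻¹ ^ 2 *
        (qNum q (m + 1) * qNum q (m + 2) - q ^ 2 * (qNum q m * qNum q (m - 1))) =
      q ^ ((m:ℝ) + 1/2) *
        ((q - q⁻¹)⁻¹ * (q ^ ((m:ℝ) + 1/2) - q ^ (-((m:ℝ) + 1/2)))) := by
  rw [qNum_mul_qNum_sub hq1]
  have h_sum_sq : (q ^ ((1:ℝ)/2) + q ^ (-(1:ℝ)/2)) ^ 2 = (1 + q) ^ 2 / q := by
    have hs : (q ^ ((1:ℝ)/2)) ^ 2 = q := by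
      rw [← Real.rpow_natCast, ← Real.rpow_mul hq0.le]; norm_num
    rw [neg_div, Real.rpow_neg hq0.le]
    field_simp
    rw [hs]
    ring
  have h_sq : q ^ ((m:ℝ) + 1/2) * q ^ ((m:ℝ) + 1/2) = q ^ (2 * m + 1) := by
    rw [← Real.rpow_add hq0, ← Real.rpow_natCast]; push_cast; ring_nf
  have h_inv : q ^ ((m:ℝ) + 1/2) * q ^ (-((m:ℝ) + 1/2)) = 1 := by
    rw [← Real.rpow_add hq0, add_neg_cancel, Real.rpow_zero]
  rw [inv_pow, h_sum_sq, mul_left_comm, mul_sub (q ^ ((m:ℝ) + 1/2)), h_sq, h_inv]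
  have h1 : 1 - q ≠ 0 := sub_ne_zero.mpr hq1.symm
  have h2 : 1 + q ≠ 0 := by positivity
  rw [show q - q⁻¹ = (1 - q) * (1 + q) / -q by field_simp; ring]
  field_simp
  ring

/-- the metaplectic map `μ(J₀)=(A⁰+1/2)/2`, `μ(J±)=(A±)²/[2]_{q^{1/2}}`
defines a representation of U_q(su(1,1)): `[μ(J₀),μ(J±)]=±μ(J±)` and
`μ(J₋)μ(J₊) − q²μ(J₊)μ(J₋) = q^{2μ(J₀)}[2μ(J₀)]_q`, where `q^{2μ(J₀)}|n⟩=q^{n+1/2}|n⟩`. -/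
theorem stmt6 (q : ℝ) (hq0 : 0 < q) (hq1 : q < 1) :
    let J0 : Module.End ℂ (Fock 1) := diag fun n => ((((n 0 : ℝ) + 1/2) / 2 : ℝ) : ℂ)
    let Jp : Module.End ℂ (Fock 1) :=
      (((q ^ ((1:ℝ)/2) + q ^ (-(1:ℝ)/2))⁻¹ : ℝ) : ℂ) • (up q 0 ^ 2)
    let Jm : Module.End ℂ (Fock 1) :=
      (((q ^ ((1:ℝ)/2) + q ^ (-(1:ℝ)/2))⁻¹ : ℝ) : ℂ) • (dn q 0 ^ 2)
    -- q^{2J₀} acts by q^{n+1/2}; [2J₀]_q acts by (q^{n+1/2}−q^{−(n+1/2)})/(q−q⁻¹)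
    let q2J0 : Module.End ℂ (Fock 1) := qd q (fun n => (n 0 : ℝ) + 1/2)
    let bk : Module.End ℂ (Fock 1) :=
      ((q - q⁻¹ : ℝ)⁻¹ : ℂ) •
        (qd q (fun n => (n 0 : ℝ) + 1/2) - qd q (fun n => -((n 0 : ℝ) + 1/2)))
    J0 * Jp - Jp * J0 = Jp ∧
    J0 * Jm - Jm * J0 = -Jm ∧
    Jm * Jp - ((q^2 : ℝ) : ℂ) • (Jp * Jm) = q2J0 * bk := by
  intro J0 Jp Jm q2J0 bk
  refine ⟨?_, ?_, ?_⟩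
  · rw [Fock.mul_smul_sub_smul_mul, diag_mul_up_sq_sub_up_sq_mul_diag q 0 (c := 1)
      fun n => by simp only [Function.update_self]; push_cast; ring, one_smul]
  · rw [Fock.mul_smul_sub_smul_mul, diag_mul_dn_sq_sub_dn_sq_mul_diag q 0 (c := 1)
      fun n hn => by simp only [Function.update_self]; push_cast [Nat.cast_sub hn]; ring, one_smul]
    exact smul_neg _ (dn q 0 ^ 2)
  · simp only [Jm, Jp, q2J0, bk, qd, smul_mul_smul_comm, dn_sq_mul_up_sq, up_sq_mul_dn_sq,
      smul_diag, diag_sub, diag_mul_diag]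
    congr 1 with n
    simp only [Pi.sub_apply, Pi.smul_apply, Pi.mul_apply, smul_eq_mul, cf_sq hq0.le hq1]
    have h := congrArg Complex.ofReal (metaplectic_casimir_coeff hq0 hq1.ne (n 0))
    push_cast at h ⊢
    linear_combination h
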